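/- arXiv:1102.4001 — 2 statements merged into one kernel-verified Lean document; each statement's English description precedes it below -/
import Mathlib

section
/- Let f(z) = -ln(1 + e^{-z}) and let g₁(z) = (e^{2z} - 2z e^z - 1)/(z²(1+e^z)²). Then for every real a ≠ 0, ∫_{{c₂,c₃,c₄ ≥ 0, c₂+c₃+c₄ ≤ 1}} f'''( a·(1 - 2c₄) ) dc₂ dc₃ dc₄ = g₁(a) / 8. Equivalently, the fourth-order divided difference of f at the nodes (a, a, a, -a) equals g₁(a)/8. -/
open MeasureTheory

noncomputable section
namespace DDaux

def F (z : ℝ) : ℝ := -Real.log (1 + Real.exp (-z))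
def F1 (z : ℝ) : ℝ := (1 + Real.exp z)⁻¹
def F2 (z : ℝ) : ℝ := -(Real.exp z / (1 + Real.exp z) ^ 2)
def F3 (z : ℝ) : ℝ := Real.exp z * (Real.exp z - 1) / (1 + Real.exp z) ^ 3

lemma pe (z : ℝ) : (0:ℝ) < 1 + Real.exp z := by positivity

lemma hF (z : ℝ) : HasDerivAt F (F1 z) z := by
  have h1 : HasDerivAt (fun z : ℝ => 1 + Real.exp (-z)) (-Real.exp (-z)) z := by
    simpa using ((Real.hasDerivAt_exp (-z)).comp z ((hasDerivAt_id z).neg)).const_add 1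
  have h2 := (h1.log (by positivity)).neg
  refine (h2.congr_deriv ?_ : HasDerivAt F _ z)
  have hx : Real.exp z ≠ 0 := (Real.exp_pos z).ne'
  rw [F1, Real.exp_neg]
  rw [neg_div, neg_neg]
  field_simp
  ring

lemma hF1 (z : ℝ) : HasDerivAt F1 (F2 z) z := by
  have := ((Real.hasDerivAt_exp z).const_add 1).inv (pe z).ne'
  exact this.congr_deriv (by simp [F2, neg_div])

lemma hF2 (z : ℝ) : HasDerivAt F2 (F3 z) z := by
  have hden : HasDerivAt (fun z : ℝ => (1 + Real.exp z) ^ 2)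
      (2 * (1 + Real.exp z) ^ 1 * Real.exp z) z :=
    ((Real.hasDerivAt_exp z).const_add 1).pow 2
  have h := ((Real.hasDerivAt_exp z).div hden (by positivity)).neg
  refine (h.congr_deriv ?_ : HasDerivAt F2 _ z)
  rw [F3]
  have h1 : (1:ℝ) + Real.exp z ≠ 0 := (pe z).ne'
  field_simp
  ring

lemma iter3 : iteratedDeriv 3 F = F3 := by
  have d1 : deriv F = F1 := funext fun z => (hF z).deriv
  have d2 : deriv F1 = F2 := funext fun z => (hF1 z).deriv
  have d3 : deriv F2 = F3 := funext fun z => (hF2 z).deriv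
  rw [show (3:ℕ) = 2 + 1 from rfl, iteratedDeriv_succ, show (2:ℕ) = 1 + 1 from rfl,
    iteratedDeriv_succ, iteratedDeriv_one, d1, d2, d3]

lemma contF3 : Continuous F3 := by
  apply Continuous.div (by continuity) (by continuity)
  intro z; positivity

lemma tri (K s : ℝ) (hs : 0 ≤ s) :
    (∫ y : Fin 2 → ℝ,
      Set.indicator {y : Fin 2 → ℝ | (∀ j, 0 ≤ y j) ∧ y 0 + y 1 ≤ s} (fun _ => K) y)
    = K * (s ^ 2 / 2) := by
  set A : Set (Fin 2 → ℝ) := {y | (∀ j, 0 ≤ y j) ∧ y 0 + y 1 ≤ s} with hA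
  set B : Set (ℝ × ℝ) := {p | (0 ≤ p.1 ∧ 0 ≤ p.2) ∧ p.1 + p.2 ≤ s} with hB
  have hBmeas : MeasurableSet B := by
    apply MeasurableSet.inter
    · exact (measurableSet_le measurable_const measurable_fst).inter
        (measurableSet_le measurable_const measurable_snd)
    · exact measurableSet_le (measurable_fst.add measurable_snd) measurable_const
  have key : (∫ y : Fin 2 → ℝ, A.indicator (fun _ => K) y)
      = ∫ p : ℝ × ℝ, B.indicator (fun _ => K) p := by
    rw [← ((volume_preserving_finTwoArrow ℝ).symm _).integral_comp'
      (A.indicator (fun _ => K))]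
    congr 1
    funext p
    have : (MeasurableEquiv.finTwoArrow (α := ℝ)).symm p ∈ A ↔ p ∈ B := by
      simp [hA, hB, Fin.forall_fin_two, and_assoc]
    simp only [Set.indicator_apply]
    exact if_congr this rfl rfl
  rw [key]
  have hBfin : volume B < ⊤ := by
    have hsub : B ⊆ Set.Icc (0, 0) (s, s) := by
      rintro ⟨u, v⟩ ⟨⟨h1, h2⟩, h3⟩
      constructor
      · exact ⟨h1, h2⟩
      · exact ⟨by linarith, by linarith⟩
    exact lt_of_le_of_lt (measure_mono hsub) isCompact_Icc.measure_lt_top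
  have hint : Integrable (B.indicator fun _ => K) := by
    rw [integrable_indicator_iff hBmeas]
    exact integrableOn_const hBfin.ne
  rw [Measure.volume_eq_prod] at hint ⊢
  rw [integral_prod _ hint]
  have inner : ∀ u : ℝ, (∫ v : ℝ, B.indicator (fun _ => K) (u, v))
      = (Set.Icc (0:ℝ) s).indicator (fun u => K * (s - u)) u := by
    intro u
    by_cases hu : 0 ≤ u
    · have : (fun v : ℝ => B.indicator (fun _ => K) (u, v))
          = (Set.Icc (0:ℝ) (s - u)).indicator (fun _ => K) := by
        funext v
        simp only [Set.indicator_apply]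
        refine if_congr ?_ rfl rfl
        simp only [hB, Set.mem_setOf_eq, Set.mem_Icc]
        constructor
        · rintro ⟨⟨_, h2⟩, h3⟩; exact ⟨h2, by linarith⟩
        · rintro ⟨h2, h3⟩; exact ⟨⟨hu, h2⟩, by linarith⟩
      rw [this, integral_indicator_const _ measurableSet_Icc, Real.volume_real_Icc]
      by_cases hus : u ≤ s
      · rw [max_eq_left (by linarith), Set.indicator_of_mem (Set.mem_Icc.2 ⟨hu, hus⟩)]
        simp [mul_comm]
      · rw [Set.indicator_of_notMem (by simp [Set.mem_Icc, hus])]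
        rw [max_eq_right (by linarith)]
        simp
    · have : (fun v : ℝ => B.indicator (fun _ => K) (u, v)) = fun _ => 0 := by
        funext v
        apply Set.indicator_of_notMem
        simp only [hB, Set.mem_setOf_eq]
        tauto
      rw [this, integral_zero, Set.indicator_of_notMem (by simp [Set.mem_Icc]; intro h; exact absurd h hu)]
  simp only [inner]
  rw [integral_indicator measurableSet_Icc, integral_Icc_eq_integral_Ioc,
    ← intervalIntegral.integral_of_le hs, intervalIntegral.integral_const_mul]
  have : (∫ u in (0:ℝ)..s, (s - u)) = s ^ 2 / 2 := by
    have hd : ∀ t ∈ Set.uIcc (0:ℝ) s, HasDerivAt (fun u : ℝ => s * u - u ^ 2 / 2) (s - t) t := by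
      intro t _
      have h := ((hasDerivAt_id t).const_mul s).sub (((hasDerivAt_id t).pow 2).div_const 2)
      exact h.congr_deriv (by simp [id])
    rw [intervalIntegral.integral_eq_sub_of_hasDerivAt hd
      (((continuous_const.sub continuous_id).intervalIntegrable 0 s))]
    ring
  rw [this]

lemma simplex_integral (φ : ℝ → ℝ) (hφ : Continuous φ) :
    (∫ c in {c : Fin 3 → ℝ | (∀ i, 0 ≤ c i) ∧ ∑ i, c i ≤ 1}, φ (c 2)) =
    ∫ t in (0:ℝ)..1, (1 - t) ^ 2 / 2 * φ t := by
  set S : Set (Fin 3 → ℝ) := {c | (∀ i, 0 ≤ c i) ∧ ∑ i, c i ≤ 1} with hS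
  have hSeq : S = (⋂ i, {c : Fin 3 → ℝ | 0 ≤ c i}) ∩ {c | ∑ i, c i ≤ 1} := by
    ext c; simp [hS, Set.mem_iInter]
  have hmeas : MeasurableSet S := by
    rw [hSeq]
    exact (MeasurableSet.iInter fun i =>
        measurableSet_le measurable_const (measurable_pi_apply i)).inter
      (measurableSet_le (Finset.measurable_sum _ fun i _ => measurable_pi_apply i)
        measurable_const)
  have hclosed : IsClosed S := by
    rw [hSeq]
    exact (isClosed_iInter fun i => isClosed_le continuous_const (continuous_apply i)).inter
      (isClosed_le (continuous_finset_sum _ fun i _ => continuous_apply i) continuous_const)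
  have hcompact : IsCompact S := by
    apply IsCompact.of_isClosed_subset (isCompact_Icc (a := (0 : Fin 3 → ℝ)) (b := 1)) hclosed
    intro c hc
    refine ⟨fun i => hc.1 i, fun i => ?_⟩
    calc c i ≤ ∑ j, c j := Finset.single_le_sum (fun j _ => hc.1 j) (Finset.mem_univ i)
    _ ≤ 1 := hc.2
  have hGint : Integrable (S.indicator fun c => φ (c 2)) := by
    rw [integrable_indicator_iff hmeas]
    exact ContinuousOn.integrableOn_compact hcompact
      ((hφ.comp (continuous_apply (2 : Fin 3))).continuousOn)
  rw [← integral_indicator hmeas]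
  set e := MeasurableEquiv.piFinSuccAbove (fun _ : Fin 3 => ℝ) 2 with he
  have hmp : MeasurePreserving e.symm :=
    (volume_preserving_piFinSuccAbove (fun _ : Fin 3 => ℝ) 2).symm e
  rw [← hmp.integral_comp' (S.indicator fun c => φ (c 2))]
  have hcomp : ∀ p : ℝ × (Fin 2 → ℝ), (S.indicator fun c => φ (c 2)) (e.symm p)
      = (if (0 ≤ p.1 ∧ (∀ j, 0 ≤ p.2 j)) ∧ p.1 + (p.2 0 + p.2 1) ≤ 1 then φ p.1 else 0) := by
    intro p
    have hsymm : e.symm p = Fin.insertNth 2 p.1 p.2 := by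
      rw [he]; rfl
    rw [Set.indicator_apply, hsymm]
    have hmem : Fin.insertNth 2 p.1 p.2 ∈ S ↔
        ((0 ≤ p.1 ∧ ∀ j, 0 ≤ p.2 j) ∧ p.1 + (p.2 0 + p.2 1) ≤ 1) := by
      simp only [hS, Set.mem_setOf_eq]
      rw [Fin.forall_iff_succAbove (2 : Fin 3), Fin.sum_univ_succAbove _ (2 : Fin 3)]
      simp [Fin.sum_univ_two, and_assoc]
    rw [if_congr hmem rfl rfl, Fin.insertNth_apply_same]
  have hint2 : Integrable
      (fun p : ℝ × (Fin 2 → ℝ) => (S.indicator fun c => φ (c 2)) (e.symm p))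
      (volume.prod volume) := by
    have := (hmp.integrable_comp_emb e.symm.measurableEmbedding
      (g := S.indicator fun c => φ (c 2))).2 hGint
    exact this
  rw [show (volume : Measure (ℝ × (Fin 2 → ℝ))) = volume.prod volume from rfl]
  rw [integral_prod _ hint2]
  simp only [hcomp]
  have hinner : ∀ t : ℝ, (∫ y : Fin 2 → ℝ,
      if (0 ≤ t ∧ (∀ j, 0 ≤ y j)) ∧ t + (y 0 + y 1) ≤ 1 then φ t else 0)
      = (Set.Icc (0:ℝ) 1).indicator (fun t => (1 - t) ^ 2 / 2 * φ t) t := by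
    intro t
    by_cases ht : 0 ≤ t
    · by_cases ht1 : t ≤ 1
      · have heq : (fun y : Fin 2 → ℝ =>
            if (0 ≤ t ∧ (∀ j, 0 ≤ y j)) ∧ t + (y 0 + y 1) ≤ 1 then φ t else 0)
            = Set.indicator {y : Fin 2 → ℝ | (∀ j, 0 ≤ y j) ∧ y 0 + y 1 ≤ 1 - t}
              (fun _ => φ t) := by
          funext y
          rw [Set.indicator_apply]
          refine if_congr ?_ rfl rfl
          simp only [Set.mem_setOf_eq]
          constructor
          · rintro ⟨⟨_, h⟩, h2⟩; exact ⟨h, by linarith⟩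
          · rintro ⟨h, h2⟩; exact ⟨⟨ht, h⟩, by linarith⟩
        rw [heq, tri _ _ (by linarith), Set.indicator_of_mem (Set.mem_Icc.2 ⟨ht, ht1⟩)]
        ring
      · have heq : (fun y : Fin 2 → ℝ =>
            if (0 ≤ t ∧ (∀ j, 0 ≤ y j)) ∧ t + (y 0 + y 1) ≤ 1 then φ t else 0)
            = fun _ => (0:ℝ) := by
          funext y
          rw [if_neg]
          rintro ⟨⟨_, h⟩, h2⟩
          linarith [h 0, h 1]
        rw [heq, integral_zero,
          Set.indicator_of_notMem (fun hmem => ht1 (Set.mem_Icc.1 hmem).2)]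
    · have heq : (fun y : Fin 2 → ℝ =>
          if (0 ≤ t ∧ (∀ j, 0 ≤ y j)) ∧ t + (y 0 + y 1) ≤ 1 then φ t else 0)
          = fun _ => (0:ℝ) := by
        funext y
        rw [if_neg]
        rintro ⟨⟨h, _⟩, _⟩
        exact ht h
      rw [heq, integral_zero,
        Set.indicator_of_notMem (fun hmem => ht (Set.mem_Icc.1 hmem).1)]
  simp only [hinner]
  rw [integral_indicator measurableSet_Icc, integral_Icc_eq_integral_Ioc,
    ← intervalIntegral.integral_of_le zero_le_one]

lemma calc_part (a : ℝ) (ha : a ≠ 0) :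
    (∫ t in (0:ℝ)..1, (1 - t) ^ 2 / 2 * F3 (a * (1 - 2 * t))) =
      ((Real.exp (2 * a) - 2 * a * Real.exp a - 1) /
          (a ^ 2 * (1 + Real.exp a) ^ 2)) / 8 := by
  set H : ℝ → ℝ := fun t =>
      (-(1:ℝ)/(4*a)) * ((1-t)^2 * F2 (a*(1-2*t)))
        + (1/(4*a^2)) * ((1-t) * F1 (a*(1-2*t)))
        - (1/(8*a^3)) * F (a*(1-2*t)) with hHdef
  have key : ∀ t ∈ Set.uIcc (0:ℝ) 1,
      HasDerivAt H ((1 - t) ^ 2 / 2 * F3 (a * (1 - 2 * t))) t := by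
    intro t _
    have hin : HasDerivAt (fun t : ℝ => a * (1 - 2*t)) (a * -2) t := by
      exact (((hasDerivAt_id t).const_mul (2:ℝ)).const_sub 1).const_mul a |>.congr_deriv (by simp)
    have h2 : HasDerivAt (fun t => F2 (a*(1-2*t))) (F3 (a*(1-2*t)) * (a * -2)) t :=
      (hF2 _).comp t hin
    have h1 : HasDerivAt (fun t => F1 (a*(1-2*t))) (F2 (a*(1-2*t)) * (a * -2)) t :=
      (hF1 _).comp t hin
    have h0 : HasDerivAt (fun t => F (a*(1-2*t))) (F1 (a*(1-2*t)) * (a * -2)) t :=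
      (hF _).comp t hin
    have hu : HasDerivAt (fun t : ℝ => (1-t)^2) (2*(1-t)^1*(-1)) t :=
      ((hasDerivAt_id t).const_sub 1).pow 2
    have hl : HasDerivAt (fun t : ℝ => 1 - t) (-1) t := (hasDerivAt_id t).const_sub 1
    have hA := hu.mul h2
    have hB := hl.mul h1
    have hH : HasDerivAt H
        ((-(1:ℝ)/(4*a)) * (2*(1-t)^1*(-1) * F2 (a*(1-2*t)) + (1-t)^2 * (F3 (a*(1-2*t)) * (a * -2)))
          + (1/(4*a^2)) * ((-1) * F1 (a*(1-2*t)) + (1-t) * (F2 (a*(1-2*t)) * (a * -2)))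
          - (1/(8*a^3)) * (F1 (a*(1-2*t)) * (a * -2))) t :=
      ((hA.const_mul _).add (hB.const_mul _)).sub (h0.const_mul _)
    convert hH using 1
    field_simp
    ring
  have hcont : Continuous fun t : ℝ => (1 - t) ^ 2 / 2 * F3 (a * (1 - 2 * t)) := by
    exact (by continuity : Continuous fun t : ℝ => (1-t)^2/2).mul
      (contF3.comp (by continuity))
  rw [intervalIntegral.integral_eq_sub_of_hasDerivAt key (hcont.intervalIntegrable 0 1)]
  have e1 : a * (1 - 2 * (1:ℝ)) = -a := by ring
  have e0 : a * (1 - 2 * (0:ℝ)) = a := by ring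
  rw [hHdef]
  simp only [e1, e0]
  have hlog : Real.log (1 + Real.exp a) = a + Real.log (1 + Real.exp (-a)) := by
    have h1 : (1:ℝ) + Real.exp a = Real.exp a * (1 + Real.exp (-a)) := by
      rw [mul_add, mul_one, ← Real.exp_add]; simp [add_comm]
    rw [h1, Real.log_mul (Real.exp_ne_zero a) (pe (-a)).ne', Real.log_exp]
  have hexp2 : Real.exp (2*a) = Real.exp a * Real.exp a := by
    rw [two_mul, Real.exp_add]
  simp only [F, F1, F2, neg_neg]
  rw [hlog, hexp2]
  have h1 : (1:ℝ) + Real.exp a ≠ 0 := (pe a).ne'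
  field_simp
  ring

end DDaux
end

/-- The fourth-order divided difference of `f(z) = -ln(1+e^{-z})` at the nodes
`(a, a, a, -a)`, written via the Hermite–Genocchi simplex formula, equals `g₁(a)/8`
where `g₁(z) = (e^{2z} - 2z e^z - 1)/(z²(1+e^z)²)`. -/
theorem divided_difference_aaa_m (a : ℝ) (ha : a ≠ 0) :
    (∫ c in {c : Fin 3 → ℝ | (∀ i, 0 ≤ c i) ∧ ∑ i, c i ≤ 1},
        iteratedDeriv 3 (fun z => -Real.log (1 + Real.exp (-z)))
          (a * (1 - 2 * c 2)))
      = ((Real.exp (2 * a) - 2 * a * Real.exp a - 1) /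
          (a ^ 2 * (1 + Real.exp a) ^ 2)) / 8 := by
  have h1 : (fun z => -Real.log (1 + Real.exp (-z))) = DDaux.F := rfl
  rw [h1, DDaux.iter3]
  exact (DDaux.simplex_integral (fun t => DDaux.F3 (a * (1 - 2 * t)))
    (DDaux.contF3.comp (by continuity))).trans (DDaux.calc_part a ha)
end

section
/- Let p > 3/2, a > 0, and μ ∈ ℝ. Then there exists a finite constant C (depending only on p, a, and μ) such that for all real r: (i) if r ≥ 1 then ∫_{ℝ³} ( (|q|² - μ - r)² + a² )^{-p/2} dq ≤ C · r^{1/2}; and (ii) if r ≤ -1 then ∫_{ℝ³} ( (|q|² - μ - r)² + a² )^{-p/2} dq ≤ C · |r|^{3/2 - p}. In particular, the integral is finite for every r ∈ ℝ. -/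
set_option maxHeartbeats 2000000
open MeasureTheory Set

/-- monotone base bound: if `0 < x ≤ |s|` then `(s^2+a^2)^(-(p/2)) ≤ x^(-p)`. -/
lemma aux1 {p a s x : ℝ} (hp : 0 ≤ p) (hx : 0 < x) (hxs : x ≤ |s|) :
    (s ^ 2 + a ^ 2) ^ (-(p / 2)) ≤ x ^ (-p) := by
  have h1 : x ^ 2 ≤ s ^ 2 + a ^ 2 := by
    have : x ^ 2 ≤ |s| ^ 2 := pow_le_pow_left₀ hx.le hxs 2
    rw [sq_abs] at this; nlinarith [sq_nonneg a]
  have h2 : (s ^ 2 + a ^ 2) ^ (-(p / 2)) ≤ (x ^ 2) ^ (-(p / 2)) :=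
    Real.rpow_le_rpow_of_nonpos (by positivity) h1 (by linarith)
  refine h2.trans_eq ?_
  rw [← Real.rpow_natCast x 2, ← Real.rpow_mul hx.le]
  rw [show ((2:ℕ):ℝ) * -(p/2) = -p by push_cast; ring]

lemma aux0 {p a s : ℝ} (hp : 0 ≤ p) (ha : 0 < a) :
    (s ^ 2 + a ^ 2) ^ (-(p / 2)) ≤ (a ^ 2) ^ (-(p / 2)) :=
  Real.rpow_le_rpow_of_nonpos (by positivity) (by nlinarith [sq_nonneg s]) (by linarith)

lemma pow_mul_rpow_neg {t : ℝ} (ht : 0 < t) (p : ℝ) :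
    t ^ 2 * ((t ^ 2 / 2) ^ (-p)) = 2 ^ p * t ^ (2 - 2 * p) := by
  have h1 : ((t:ℝ) ^ 2 / 2) ^ (-p) = 2 ^ p * t ^ (-(2*p)) := by
    rw [Real.div_rpow (by positivity) (by norm_num), ← Real.rpow_natCast t 2,
      ← Real.rpow_mul ht.le, Real.rpow_neg (by norm_num : (0:ℝ) ≤ 2),
      div_eq_mul_inv, inv_inv, mul_comm]
    congr 2
    push_cast; ring
  rw [h1, ← Real.rpow_natCast t 2, mul_left_comm, ← Real.rpow_add ht]
  have : ((2:ℕ):ℝ) + -(2 * p) = 2 - 2 * p := by push_cast; ring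
  rw [this]

/-- The 1D radial integrand. -/
noncomputable def FF (p a b : ℝ) (t : ℝ) : ℝ := t ^ 2 * ((t ^ 2 - b) ^ 2 + a ^ 2) ^ (-(p / 2))

lemma FF_nonneg (p : ℝ) {a : ℝ} (b t : ℝ) : 0 ≤ FF p a b t := by
  unfold FF; positivity

lemma base_pos {a : ℝ} (ha : 0 < a) (s : ℝ) : 0 < s ^ 2 + a ^ 2 := by positivity

lemma FF_cont (p : ℝ) {a : ℝ} (ha : 0 < a) (b : ℝ) : Continuous (FF p a b) := by
  unfold FF
  refine (continuous_pow 2).mul ?_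
  refine Continuous.rpow_const ?_ (fun t => Or.inl (ne_of_gt (base_pos ha _)))
  exact (((continuous_pow 2).sub continuous_const).pow 2).add continuous_const

/-- global integrability of the radial integrand -/
lemma FF_integrableOn {p a : ℝ} (hp : 3 / 2 < p) (ha : 0 < a) (b : ℝ) :
    IntegrableOn (FF p a b) (Ioi (0:ℝ)) := by
  set T : ℝ := |b| + 1 with hT
  have hT0 : 0 < T := by positivity
  have hT1 : 1 ≤ T := le_add_of_nonneg_left (abs_nonneg b)
  have hsplit : Ioc (0:ℝ) T ∪ Ioi T = Ioi (0:ℝ) := Ioc_union_Ioi_eq_Ioi hT0.le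
  rw [← hsplit]
  refine IntegrableOn.union ((FF_cont p ha b).integrableOn_Ioc) ?_
  -- on Ioi T, dominate by 2^p t^(2-2p)
  have hint : IntegrableOn (fun t : ℝ => 2 ^ p * t ^ (2 - 2 * p)) (Ioi T) :=
    (integrableOn_Ioi_rpow_of_lt (by linarith) hT0).const_mul _
  refine hint.mono' ((FF_cont p ha b).aestronglyMeasurable.restrict) ?_
  filter_upwards [ae_restrict_mem measurableSet_Ioi] with t ht
  have ht0 : (0:ℝ) < t := hT0.trans ht
  have htT : T < t := ht
  have hx : t ^ 2 / 2 ≤ |t ^ 2 - b| := by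
    have hq : 0 < (t - (|b| + 1)) * (t + (|b| + 1)) :=
      mul_pos (by linarith) (by linarith [abs_nonneg b])
    have hb' : b ≤ t ^ 2 / 2 := by nlinarith [le_abs_self b, abs_nonneg b, hq]
    rw [abs_of_nonneg (by nlinarith [sq_nonneg t])]
    linarith
  have key := aux1 (p := p) (a := a) (s := t ^ 2 - b) (by linarith)
    (by positivity : (0:ℝ) < t ^ 2 / 2) hx
  have hFF : FF p a b t ≤ 2 ^ p * t ^ (2 - 2 * p) := by
    rw [← pow_mul_rpow_neg ht0]
    exact mul_le_mul_of_nonneg_left key (sq_nonneg t)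
  rw [Real.norm_of_nonneg (FF_nonneg _ _ _)]
  exact hFF

lemma sq_mul_rpow {t : ℝ} (ht : 0 < t) (p : ℝ) :
    t ^ 2 * (t ^ 2) ^ (-p) = t ^ (2 - 2 * p) := by
  rw [← Real.rpow_natCast t 2, ← Real.rpow_mul ht.le, ← Real.rpow_add ht]
  congr 1
  push_cast; ring

lemma L2 {p a : ℝ} (hp : 3 / 2 < p) (ha : 0 < a) :
    ∃ C : ℝ, 0 < C ∧ ∀ m : ℝ, 1 ≤ m →
      (∫ t in Ioi (0:ℝ), FF p a (-m) t) ≤ C * m ^ ((3:ℝ)/2 - p) := by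
  have h3 : (0:ℝ) < 2 * p - 3 := by linarith
  refine ⟨1 + 1 / (2 * p - 3), by positivity, fun m hm => ?_⟩
  have hm0 : (0:ℝ) < m := by linarith
  have hs : 0 < Real.sqrt m := Real.sqrt_pos.2 hm0
  set c := Real.sqrt m with hc
  have hc2 : c ^ 2 = m := Real.sq_sqrt hm0.le
  have hrw : m ^ ((3:ℝ)/2 - p) = m ^ ((1:ℝ)/2) * (m * m ^ (-p)) := by
    rw [show m * m ^ (-p) = m ^ (1:ℝ) * m ^ (-p) by rw [Real.rpow_one],
      ← Real.rpow_add hm0, ← Real.rpow_add hm0]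
    congr 1; ring
  have hcr : c = m ^ ((1:ℝ)/2) := Real.sqrt_eq_rpow m
  rw [← Ioc_union_Ioi_eq_Ioi hs.le,
    setIntegral_union (Ioc_disjoint_Ioi le_rfl) measurableSet_Ioi
      ((FF_integrableOn hp ha _).mono_set Ioc_subset_Ioi_self)
      ((FF_integrableOn hp ha _).mono_set (Ioi_subset_Ioi hs.le))]
  have part1 : (∫ t in Ioc (0:ℝ) c, FF p a (-m) t) ≤ m ^ ((3:ℝ)/2 - p) := by
    have hmono : ∀ t ∈ Ioc (0:ℝ) c, FF p a (-m) t ≤ m * m ^ (-p) := by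
      intro t ht
      have ht2 : t ^ 2 ≤ m := by
        rw [← hc2]; exact pow_le_pow_left₀ ht.1.le ht.2 2
      have habs : m ≤ |t ^ 2 - (-m)| := by
        rw [sub_neg_eq_add, abs_of_nonneg (by positivity)]
        nlinarith [sq_nonneg t]
      have := aux1 (p := p) (a := a) (by linarith) hm0 habs
      exact mul_le_mul ht2 this (by positivity) hm0.le
    calc (∫ t in Ioc (0:ℝ) c, FF p a (-m) t)
        ≤ ∫ _ in Ioc (0:ℝ) c, m * m ^ (-p) :=
          setIntegral_mono_on ((FF_integrableOn hp ha _).mono_set Ioc_subset_Ioi_self)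
            (integrableOn_const measure_Ioc_lt_top.ne) measurableSet_Ioc hmono
      _ = c * (m * m ^ (-p)) := by
          rw [setIntegral_const, Real.volume_real_Ioc_of_le hs.le, smul_eq_mul,
            sub_zero]
      _ = m ^ ((3:ℝ)/2 - p) := by rw [hrw, hcr]
  have part2 : (∫ t in Ioi c, FF p a (-m) t) ≤ m ^ ((3:ℝ)/2 - p) / (2 * p - 3) := by
    have hmono : ∀ t ∈ Ioi c, FF p a (-m) t ≤ t ^ (2 - 2 * p) := by
      intro t ht
      have ht0 : (0:ℝ) < t := hs.trans ht
      have habs : t ^ 2 ≤ |t ^ 2 - (-m)| := by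
        rw [sub_neg_eq_add, abs_of_nonneg (by positivity)]
        linarith
      have := aux1 (p := p) (a := a) (by linarith) (by positivity : (0:ℝ) < t ^ 2) habs
      calc FF p a (-m) t ≤ t ^ 2 * (t ^ 2) ^ (-p) :=
            mul_le_mul_of_nonneg_left this (sq_nonneg t)
        _ = t ^ (2 - 2 * p) := sq_mul_rpow ht0 p
    calc (∫ t in Ioi c, FF p a (-m) t)
        ≤ ∫ t in Ioi c, t ^ (2 - 2 * p) :=
          setIntegral_mono_on ((FF_integrableOn hp ha _).mono_set (Ioi_subset_Ioi hs.le))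
            (integrableOn_Ioi_rpow_of_lt (by linarith) hs) measurableSet_Ioi hmono
      _ = -c ^ (2 - 2 * p + 1) / (2 - 2 * p + 1) := integral_Ioi_rpow_of_lt (by linarith) hs
      _ = c ^ (3 - 2 * p) / (2 * p - 3) := by
          rw [show (2 - 2 * p + 1 : ℝ) = 3 - 2 * p by ring,
            div_eq_div_iff (show (3:ℝ) - 2 * p ≠ 0 by intro h; linarith)
              (show (2:ℝ) * p - 3 ≠ 0 by intro h; linarith)]
          ring
      _ = m ^ ((3:ℝ)/2 - p) / (2 * p - 3) := by
          rw [hcr, ← Real.rpow_mul hm0.le]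
          congr 2; ring
  calc (∫ t in Ioc (0:ℝ) c, FF p a (-m) t) + ∫ t in Ioi c, FF p a (-m) t
      ≤ m ^ ((3:ℝ)/2 - p) + m ^ ((3:ℝ)/2 - p) / (2 * p - 3) := add_le_add part1 part2
    _ = (1 + 1 / (2 * p - 3)) * m ^ ((3:ℝ)/2 - p) := by ring

lemma edge_int {p : ℝ} (hp : 1 < p) {x : ℝ} (hx : 0 < x) :
    (∫ s in Ioi x, s ^ (-p)) = x ^ (1 - p) / (p - 1) := by
  rw [integral_Ioi_rpow_of_lt (by linarith) hx, show (-p + 1 : ℝ) = 1 - p by ring,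
    div_eq_div_iff (show (1:ℝ) - p ≠ 0 by intro h; linarith)
      (show p - 1 ≠ 0 by intro h; linarith)]
  ring

lemma Ioc_rpow_le {p : ℝ} (hp : 1 < p) {x y : ℝ} (hx : 0 < x) :
    (∫ s in Ioc x y, s ^ (-p)) ≤ x ^ (1 - p) / (p - 1) := by
  have h1 : (∫ s in Ioc x y, s ^ (-p)) ≤ ∫ s in Ioi x, s ^ (-p) := by
    refine setIntegral_mono_set (integrableOn_Ioi_rpow_of_lt (by linarith) hx) ?_
      (HasSubset.Subset.eventuallyLE Ioc_subset_Ioi_self)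
    filter_upwards [ae_restrict_mem measurableSet_Ioi] with s hs
    exact Real.rpow_nonneg (hx.trans hs).le _
  rw [edge_int hp hx] at h1
  exact h1

lemma L1_uniform {p a : ℝ} (hp : 3 / 2 < p) (ha : 0 < a) :
    ∃ C : ℝ, 0 < C ∧ ∀ b : ℝ, b ≤ 4 →
      (∫ t in Ioi (0:ℝ), FF p a b t) ≤ C := by
  have h3 : (0:ℝ) < 2 * p - 3 := by linarith
  have hA : (0:ℝ) < (a ^ 2) ^ (-(p / 2)) := Real.rpow_pos_of_pos (by positivity) _
  refine ⟨27 * (a ^ 2) ^ (-(p / 2)) + 2 ^ p / (2 * p - 3), by positivity, fun b hb => ?_⟩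
  rw [← Ioc_union_Ioi_eq_Ioi (by norm_num : (0:ℝ) ≤ 3),
    setIntegral_union (Ioc_disjoint_Ioi le_rfl) measurableSet_Ioi
      ((FF_integrableOn hp ha _).mono_set Ioc_subset_Ioi_self)
      ((FF_integrableOn hp ha _).mono_set (Ioi_subset_Ioi (by norm_num)))]
  have part1 : (∫ t in Ioc (0:ℝ) 3, FF p a b t) ≤ 27 * (a ^ 2) ^ (-(p / 2)) := by
    calc (∫ t in Ioc (0:ℝ) 3, FF p a b t)
        ≤ ∫ _ in Ioc (0:ℝ) 3, 9 * (a ^ 2) ^ (-(p / 2)) := by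
          refine setIntegral_mono_on ((FF_integrableOn hp ha _).mono_set Ioc_subset_Ioi_self)
            (integrableOn_const measure_Ioc_lt_top.ne) measurableSet_Ioc ?_
          intro t ht
          have h9 : t ^ 2 ≤ 9 := by nlinarith [ht.1.le, ht.2]
          exact mul_le_mul h9 (aux0 (by linarith) ha) (Real.rpow_nonneg (by positivity) _)
            (by norm_num)
      _ = 27 * (a ^ 2) ^ (-(p / 2)) := by
          rw [setIntegral_const, Real.volume_real_Ioc_of_le (by norm_num : (0:ℝ) ≤ 3), smul_eq_mul]
          ring
  have part2 : (∫ t in Ioi (3:ℝ), FF p a b t) ≤ 2 ^ p / (2 * p - 3) := by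
    have hmono : ∀ t ∈ Ioi (3:ℝ), FF p a b t ≤ 2 ^ p * t ^ (2 - 2 * p) := by
      intro t ht
      have ht3 : (3:ℝ) < t := ht
      have ht0 : (0:ℝ) < t := by linarith
      have h9 : (9:ℝ) ≤ t ^ 2 := by nlinarith [mul_pos (show (0:ℝ) < t - 3 by linarith) (show (0:ℝ) < t + 3 by linarith)]
      have habs : t ^ 2 / 2 ≤ |t ^ 2 - b| := by
        rw [abs_of_nonneg (by linarith)]
        linarith
      have key := aux1 (p := p) (a := a) (by linarith) (by positivity : (0:ℝ) < t ^ 2 / 2) habs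
      rw [← pow_mul_rpow_neg ht0]
      exact mul_le_mul_of_nonneg_left key (sq_nonneg t)
    calc (∫ t in Ioi (3:ℝ), FF p a b t)
        ≤ ∫ t in Ioi (3:ℝ), 2 ^ p * t ^ (2 - 2 * p) :=
          setIntegral_mono_on ((FF_integrableOn hp ha _).mono_set (Ioi_subset_Ioi (by norm_num)))
            ((integrableOn_Ioi_rpow_of_lt (by linarith) (by norm_num)).const_mul _)
            measurableSet_Ioi hmono
      _ = 2 ^ p * ∫ t in Ioi (3:ℝ), t ^ (2 - 2 * p) := integral_const_mul _ _
      _ = 2 ^ p * (-(3:ℝ) ^ (2 - 2 * p + 1) / (2 - 2 * p + 1)) := by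
          rw [integral_Ioi_rpow_of_lt (by linarith) (by norm_num)]
      _ ≤ 2 ^ p / (2 * p - 3) := by
          have h1 : ((3:ℝ)) ^ (3 - 2 * p) ≤ 1 :=
            Real.rpow_le_one_of_one_le_of_nonpos (by norm_num) (by linarith)
          have h2 : (0:ℝ) < 2 ^ p := Real.rpow_pos_of_pos (by norm_num) p
          have h4 : (0:ℝ) ≤ (2 * p - 3)⁻¹ := by positivity
          rw [show (2 - 2 * p + 1 : ℝ) = 3 - 2 * p by ring]
          have e : -((3:ℝ) ^ (3 - 2 * p)) / (3 - 2 * p) = 3 ^ (3 - 2 * p) / (2 * p - 3) := by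
            rw [div_eq_div_iff (show (3:ℝ) - 2 * p ≠ 0 by intro h; linarith)
              (show (2:ℝ) * p - 3 ≠ 0 by intro h; linarith)]
            ring
          rw [e, div_eq_mul_inv, div_eq_mul_inv]
          nlinarith [mul_le_mul_of_nonneg_right (mul_le_mul_of_nonneg_left h1 h2.le) h4]
  linarith [part1, part2]

lemma L1_big {p a : ℝ} (hp : 3 / 2 < p) (ha : 0 < a) :
    ∃ C : ℝ, 0 < C ∧ ∀ b : ℝ, 4 < b →
      (∫ t in Ioi (0:ℝ), FF p a b t) ≤ C * Real.sqrt b := by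
  have h3 : (0:ℝ) < 2 * p - 3 := by linarith
  have h1p : (0:ℝ) < p - 1 := by linarith
  have hA : (0:ℝ) < (a ^ 2) ^ (-(p / 2)) := Real.rpow_pos_of_pos (by positivity) _
  have hK1 : (0:ℝ) < 2 ^ (p-1) / (p-1) := by positivity
  have hK3 : (0:ℝ) < 2 * 3 ^ (p-1) / (p-1) := by positivity
  have hK4 : (0:ℝ) < 2 ^ p / (2*p-3) := by positivity
  refine ⟨2 ^ (p-1)/(p-1) + 4 * (a ^ 2) ^ (-(p / 2)) + 2 * 3 ^ (p-1)/(p-1) + 2 ^ p/(2*p-3),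
    by positivity, fun b hb => ?_⟩
  have hb0 : (0:ℝ) < b := by linarith
  set β := Real.sqrt b with hβ
  set u := Real.sqrt (b-1) with hu
  set v := Real.sqrt (b+1) with hv
  set w := Real.sqrt (2*b) with hw
  have hβ2 : β ^ 2 = b := Real.sq_sqrt hb0.le
  have hu2 : u ^ 2 = b - 1 := Real.sq_sqrt (by linarith)
  have hv2 : v ^ 2 = b + 1 := Real.sq_sqrt (by linarith)
  have hw2 : w ^ 2 = 2 * b := Real.sq_sqrt (by linarith)
  have hβ0 : 0 < β := Real.sqrt_pos.2 hb0
  have hu0 : 0 < u := Real.sqrt_pos.2 (by linarith)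
  have hv0 : 0 < v := Real.sqrt_pos.2 (by linarith)
  have hw0 : 0 < w := Real.sqrt_pos.2 (by linarith)
  have huβ : u < β := Real.sqrt_lt_sqrt (by linarith) (by linarith)
  have hβv : β < v := Real.sqrt_lt_sqrt hb0.le (by linarith)
  have hvw : v < w := Real.sqrt_lt_sqrt (by linarith) (by linarith)
  have huv : u < v := huβ.trans hβv
  have hβ1 : 2 ≤ β := by nlinarith [hβ2, hβ0.le, mul_pos hβ0 hβ0]
  have hv2β : v ≤ 2 * β := by nlinarith [hv2, hβ2, hv0.le, hβ0.le, mul_pos hv0 hβ0]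
  have h1w : 1 ≤ w := by nlinarith [hw2, hw0.le, mul_pos hw0 hw0]
  -- inverse gap bounds
  have hgap1 : 1/(2*β) ≤ β - u := by
    have hprod : (β - u) * (β + u) = 1 := by linear_combination hβ2 - hu2
    have h5 : 0 < β + u := by linarith
    have h6 : β - u = 1/(β + u) := by field_simp; linear_combination hprod
    rw [h6]
    exact one_div_le_one_div_of_le h5 (by linarith)
  have hgap2 : 1/(3*β) ≤ v - β := by
    have hprod : (v - β) * (v + β) = 1 := by linear_combination hv2 - hβ2
    have h5 : 0 < v + β := by linarith
    have h6 : v - β = 1/(v + β) := by field_simp; linear_combination hprod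
    rw [h6]
    exact one_div_le_one_div_of_le h5 (by linarith)
  have hgap3 : v - u ≤ 2/β := by
    have hprod : (v - u) * (v + u) = 2 := by linear_combination hv2 - hu2
    have h5 : 0 < v + u := by linarith
    have h6 : v - u = 2/(v + u) := by field_simp; linear_combination hprod
    rw [h6]
    exact div_le_div_of_nonneg_left (by norm_num) hβ0 (by linarith)
  have e4 : b * β⁻¹ = β := by
    rw [← hβ2, sq, mul_assoc, mul_inv_cancel₀ hβ0.ne', mul_one]
  -- splitting
  have iA : IntegrableOn (FF p a b) (Ioc 0 u) := (FF_integrableOn hp ha b).mono_set Ioc_subset_Ioi_self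
  have iB : IntegrableOn (FF p a b) (Ioc u v) :=
    (FF_integrableOn hp ha b).mono_set (Ioc_subset_Ioi_self.trans (Ioi_subset_Ioi hu0.le))
  have iC : IntegrableOn (FF p a b) (Ioc v w) :=
    (FF_integrableOn hp ha b).mono_set (Ioc_subset_Ioi_self.trans (Ioi_subset_Ioi hv0.le))
  have iD : IntegrableOn (FF p a b) (Ioi w) :=
    (FF_integrableOn hp ha b).mono_set (Ioi_subset_Ioi hw0.le)
  have iAB : IntegrableOn (FF p a b) (Ioc 0 v) := (FF_integrableOn hp ha b).mono_set Ioc_subset_Ioi_self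
  have iABC : IntegrableOn (FF p a b) (Ioc 0 w) := (FF_integrableOn hp ha b).mono_set Ioc_subset_Ioi_self
  have d1 : Disjoint (Ioc (0:ℝ) u) (Ioc u v) := (Ioc_disjoint_Ioi le_rfl).mono_right Ioc_subset_Ioi_self
  have d2 : Disjoint (Ioc (0:ℝ) v) (Ioc v w) := (Ioc_disjoint_Ioi le_rfl).mono_right Ioc_subset_Ioi_self
  have hsplit : (∫ t in Ioi (0:ℝ), FF p a b t) =
      (∫ t in Ioc (0:ℝ) u, FF p a b t) + (∫ t in Ioc u v, FF p a b t) +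
      (∫ t in Ioc v w, FF p a b t) + (∫ t in Ioi w, FF p a b t) := by
    rw [← Ioc_union_Ioi_eq_Ioi hw0.le,
      setIntegral_union (Ioc_disjoint_Ioi le_rfl) measurableSet_Ioi iABC iD,
      ← Ioc_union_Ioc_eq_Ioc hv0.le hvw.le,
      setIntegral_union d2 measurableSet_Ioc iAB iC,
      ← Ioc_union_Ioc_eq_Ioc hu0.le huv.le,
      setIntegral_union d1 measurableSet_Ioc iA iB]
  rw [hsplit]
  -- piece A
  have pieceA : (∫ t in Ioc (0:ℝ) u, FF p a b t) ≤ 2 ^ (p-1)/(p-1) * β := by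
    have hcont : ContinuousOn (fun t : ℝ => (β - t) ^ (-p)) (Icc 0 u) := by
      refine ContinuousOn.rpow_const (continuousOn_const.sub continuousOn_id) ?_
      intro t ht
      exact Or.inl (sub_ne_zero.2 (ne_of_gt (lt_of_le_of_lt ht.2 huβ)))
    have iRA : IntegrableOn (fun t : ℝ => b * β ^ (-p) * (β - t) ^ (-p)) (Ioc 0 u) :=
      ((hcont.integrableOn_Icc).mono_set Ioc_subset_Icc_self).const_mul _
    have hmono : ∀ t ∈ Ioc (0:ℝ) u, FF p a b t ≤ b * β ^ (-p) * (β - t) ^ (-p) := by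
      intro t ht
      have htβ : t < β := lt_of_le_of_lt ht.2 huβ
      have hx0 : (0:ℝ) < β * (β - t) := mul_pos hβ0 (by linarith)
      have ht2 : t ^ 2 ≤ b - 1 := by
        calc t ^ 2 ≤ u ^ 2 := pow_le_pow_left₀ ht.1.le ht.2 2
        _ = b - 1 := hu2
      have habs : β * (β - t) ≤ |t ^ 2 - b| := by
        rw [abs_of_nonpos (by linarith)]
        nlinarith [mul_nonneg ht.1.le (sub_nonneg.2 htβ.le), hβ2]
      have key := aux1 (p := p) (a := a) (by linarith) hx0 habs
      have hmul : (β * (β - t)) ^ (-p) = β ^ (-p) * (β - t) ^ (-p) :=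
        Real.mul_rpow hβ0.le (by linarith)
      rw [hmul] at key
      calc FF p a b t ≤ b * (β ^ (-p) * (β - t) ^ (-p)) :=
            mul_le_mul (by linarith) key (by positivity) hb0.le
        _ = b * β ^ (-p) * (β - t) ^ (-p) := by ring
    have hint : (∫ t in Ioc (0:ℝ) u, (β - t) ^ (-p)) ≤ (β - u) ^ (1-p) / (p-1) := by
      have e1 : (∫ t in Ioc (0:ℝ) u, (β - t) ^ (-p)) = ∫ s in Ioc (β - u) β, s ^ (-p) := by
        rw [← intervalIntegral.integral_of_le hu0.le,
          intervalIntegral.integral_comp_sub_left (fun s => s ^ (-p)) β, sub_zero,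
          intervalIntegral.integral_of_le (by linarith : β - u ≤ β)]
      rw [e1]
      exact Ioc_rpow_le (by linarith) (by linarith)
    have hgapb : (β - u) ^ (1-p) ≤ 2 ^ (p-1) * β ^ (p-1) := by
      have h7 : (β - u) ^ (1-p) ≤ (1/(2*β)) ^ (1-p) :=
        Real.rpow_le_rpow_of_nonpos (by positivity) hgap1 (by linarith)
      have h8 : ((1:ℝ)/(2*β)) ^ (1-p) = (2*β) ^ (p-1) := by
        rw [one_div, Real.inv_rpow (by positivity), ← Real.rpow_neg (by positivity)]
        congr 1; ring
      have h9 : ((2:ℝ)*β) ^ (p-1) = 2 ^ (p-1) * β ^ (p-1) := Real.mul_rpow (by norm_num) hβ0.le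
      rw [h8, h9] at h7
      exact h7
    have e3 : β ^ (-p) * β ^ (p-1) = β⁻¹ := by
      rw [← Real.rpow_add hβ0, show -p + (p-1) = (-1:ℝ) by ring, Real.rpow_neg_one]
    calc (∫ t in Ioc (0:ℝ) u, FF p a b t)
        ≤ ∫ t in Ioc (0:ℝ) u, b * β ^ (-p) * (β - t) ^ (-p) :=
          setIntegral_mono_on iA iRA measurableSet_Ioc hmono
      _ = b * β ^ (-p) * ∫ t in Ioc (0:ℝ) u, (β - t) ^ (-p) := integral_const_mul _ _
      _ ≤ b * β ^ (-p) * ((β - u) ^ (1-p) / (p-1)) := by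
          refine mul_le_mul_of_nonneg_left hint ?_
          positivity
      _ ≤ b * β ^ (-p) * ((2 ^ (p-1) * β ^ (p-1)) / (p-1)) := by
          refine mul_le_mul_of_nonneg_left ?_ (by positivity)
          exact div_le_div_of_nonneg_right hgapb h1p.le
      _ = 2 ^ (p-1)/(p-1) * (b * (β ^ (-p) * β ^ (p-1))) := by ring
      _ = 2 ^ (p-1)/(p-1) * β := by rw [e3, e4]
  -- piece B
  have pieceB : (∫ t in Ioc u v, FF p a b t) ≤ 4 * (a ^ 2) ^ (-(p / 2)) * β := by
    have hmono : ∀ t ∈ Ioc u v, FF p a b t ≤ 2 * b * (a ^ 2) ^ (-(p / 2)) := by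
      intro t ht
      have ht0 : 0 < t := hu0.trans ht.1
      have ht2 : t ^ 2 ≤ 2 * b := by
        calc t ^ 2 ≤ v ^ 2 := pow_le_pow_left₀ ht0.le ht.2 2
        _ = b + 1 := hv2
        _ ≤ 2 * b := by linarith
      exact mul_le_mul ht2 (aux0 (by linarith) ha) (Real.rpow_nonneg (by positivity) _)
        (by linarith)
    calc (∫ t in Ioc u v, FF p a b t)
        ≤ ∫ _ in Ioc u v, 2 * b * (a ^ 2) ^ (-(p / 2)) :=
          setIntegral_mono_on iB (integrableOn_const measure_Ioc_lt_top.ne)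
            measurableSet_Ioc hmono
      _ = (v - u) * (2 * b * (a ^ 2) ^ (-(p / 2))) := by
          rw [setIntegral_const, Real.volume_real_Ioc_of_le huv.le, smul_eq_mul]
      _ ≤ (2/β) * (2 * b * (a ^ 2) ^ (-(p / 2))) :=
          mul_le_mul_of_nonneg_right hgap3 (by positivity)
      _ = 4 * (a ^ 2) ^ (-(p / 2)) * (b * β⁻¹) := by
          field_simp
          ring
      _ = 4 * (a ^ 2) ^ (-(p / 2)) * β := by rw [e4]
  -- piece C
  have pieceC : (∫ t in Ioc v w, FF p a b t) ≤ 2 * 3 ^ (p-1)/(p-1) * β := by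
    have hcont : ContinuousOn (fun t : ℝ => (t - β) ^ (-p)) (Icc v w) := by
      refine ContinuousOn.rpow_const (continuousOn_id.sub continuousOn_const) ?_
      intro t ht
      exact Or.inl (sub_ne_zero.2 (ne_of_gt (hβv.trans_le ht.1)))
    have iRC : IntegrableOn (fun t : ℝ => 2 * b * β ^ (-p) * (t - β) ^ (-p)) (Ioc v w) :=
      ((hcont.integrableOn_Icc).mono_set Ioc_subset_Icc_self).const_mul _
    have hmono : ∀ t ∈ Ioc v w, FF p a b t ≤ 2 * b * β ^ (-p) * (t - β) ^ (-p) := by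
      intro t ht
      have ht0 : 0 < t := hv0.trans ht.1
      have htβ : β < t := hβv.trans ht.1
      have hx0 : (0:ℝ) < β * (t - β) := mul_pos hβ0 (by linarith)
      have ht2 : t ^ 2 ≤ 2 * b := by
        calc t ^ 2 ≤ w ^ 2 := pow_le_pow_left₀ ht0.le ht.2 2
        _ = 2 * b := hw2
      have hlow : b + 1 < t ^ 2 := by
        calc b + 1 = v ^ 2 := hv2.symm
        _ < t ^ 2 := by nlinarith [mul_pos (show (0:ℝ) < t - v by linarith [ht.1]) (show (0:ℝ) < t + v by linarith)]
      have habs : β * (t - β) ≤ |t ^ 2 - b| := by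
        rw [abs_of_nonneg (by linarith)]
        nlinarith [mul_nonneg ht0.le (sub_nonneg.2 htβ.le), hβ2]
      have key := aux1 (p := p) (a := a) (by linarith) hx0 habs
      have hmul : (β * (t - β)) ^ (-p) = β ^ (-p) * (t - β) ^ (-p) :=
        Real.mul_rpow hβ0.le (by linarith)
      rw [hmul] at key
      calc FF p a b t ≤ (2 * b) * (β ^ (-p) * (t - β) ^ (-p)) :=
            mul_le_mul ht2 key (by positivity) (by linarith)
        _ = 2 * b * β ^ (-p) * (t - β) ^ (-p) := by ring
    have hint : (∫ t in Ioc v w, (t - β) ^ (-p)) ≤ (v - β) ^ (1-p) / (p-1) := by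
      have e1 : (∫ t in Ioc v w, (t - β) ^ (-p)) = ∫ s in Ioc (v - β) (w - β), s ^ (-p) := by
        rw [← intervalIntegral.integral_of_le hvw.le,
          intervalIntegral.integral_comp_sub_right (fun s => s ^ (-p)) β,
          intervalIntegral.integral_of_le (by linarith : v - β ≤ w - β)]
      rw [e1]
      exact Ioc_rpow_le (by linarith) (by linarith)
    have hgapb : (v - β) ^ (1-p) ≤ 3 ^ (p-1) * β ^ (p-1) := by
      have h7 : (v - β) ^ (1-p) ≤ (1/(3*β)) ^ (1-p) :=
        Real.rpow_le_rpow_of_nonpos (by positivity) hgap2 (by linarith)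
      have h8 : ((1:ℝ)/(3*β)) ^ (1-p) = (3*β) ^ (p-1) := by
        rw [one_div, Real.inv_rpow (by positivity), ← Real.rpow_neg (by positivity)]
        congr 1; ring
      have h9 : ((3:ℝ)*β) ^ (p-1) = 3 ^ (p-1) * β ^ (p-1) := Real.mul_rpow (by norm_num) hβ0.le
      rw [h8, h9] at h7
      exact h7
    have e3 : β ^ (-p) * β ^ (p-1) = β⁻¹ := by
      rw [← Real.rpow_add hβ0, show -p + (p-1) = (-1:ℝ) by ring, Real.rpow_neg_one]
    calc (∫ t in Ioc v w, FF p a b t)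
        ≤ ∫ t in Ioc v w, 2 * b * β ^ (-p) * (t - β) ^ (-p) :=
          setIntegral_mono_on iC iRC measurableSet_Ioc hmono
      _ = 2 * b * β ^ (-p) * ∫ t in Ioc v w, (t - β) ^ (-p) := integral_const_mul _ _
      _ ≤ 2 * b * β ^ (-p) * ((v - β) ^ (1-p) / (p-1)) := by
          refine mul_le_mul_of_nonneg_left hint ?_
          positivity
      _ ≤ 2 * b * β ^ (-p) * ((3 ^ (p-1) * β ^ (p-1)) / (p-1)) := by
          refine mul_le_mul_of_nonneg_left ?_ (by positivity)
          exact div_le_div_of_nonneg_right hgapb h1p.le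
      _ = 2 * 3 ^ (p-1)/(p-1) * (b * (β ^ (-p) * β ^ (p-1))) := by ring
      _ = 2 * 3 ^ (p-1)/(p-1) * β := by rw [e3, e4]
  -- piece D
  have pieceD : (∫ t in Ioi w, FF p a b t) ≤ 2 ^ p/(2*p-3) * β := by
    have hmono : ∀ t ∈ Ioi w, FF p a b t ≤ 2 ^ p * t ^ (2 - 2 * p) := by
      intro t ht
      have htw : w < t := ht
      have ht0 : (0:ℝ) < t := hw0.trans ht
      have ht2 : 2 * b < t ^ 2 := by
        calc 2 * b = w ^ 2 := hw2.symm
        _ < t ^ 2 := by nlinarith [mul_pos (show (0:ℝ) < t - w by linarith) (show (0:ℝ) < t + w by linarith)]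
      have habs : t ^ 2 / 2 ≤ |t ^ 2 - b| := by
        rw [abs_of_nonneg (by linarith)]
        linarith
      have key := aux1 (p := p) (a := a) (by linarith) (by positivity : (0:ℝ) < t ^ 2 / 2) habs
      rw [← pow_mul_rpow_neg ht0]
      exact mul_le_mul_of_nonneg_left key (sq_nonneg t)
    have hval : (∫ t in Ioi w, t ^ (2 - 2*p)) = -w ^ (2 - 2*p + 1) / (2 - 2*p + 1) :=
      integral_Ioi_rpow_of_lt (by linarith) hw0
    calc (∫ t in Ioi w, FF p a b t)
        ≤ ∫ t in Ioi w, 2 ^ p * t ^ (2 - 2 * p) :=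
          setIntegral_mono_on iD
            ((integrableOn_Ioi_rpow_of_lt (by linarith) hw0).const_mul _)
            measurableSet_Ioi hmono
      _ = 2 ^ p * ∫ t in Ioi w, t ^ (2 - 2 * p) := integral_const_mul _ _
      _ = 2 ^ p * (-w ^ (2 - 2*p + 1) / (2 - 2*p + 1)) := by rw [hval]
      _ ≤ 2 ^ p/(2*p-3) := by
          have h1 : w ^ (3 - 2 * p) ≤ 1 :=
            Real.rpow_le_one_of_one_le_of_nonpos h1w (by linarith)
          have h2 : (0:ℝ) < 2 ^ p := Real.rpow_pos_of_pos (by norm_num) p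
          have h4 : (0:ℝ) ≤ (2 * p - 3)⁻¹ := by positivity
          rw [show (2 - 2 * p + 1 : ℝ) = 3 - 2 * p by ring]
          have e : -(w ^ (3 - 2 * p)) / (3 - 2 * p) = w ^ (3 - 2 * p) / (2 * p - 3) := by
            rw [div_eq_div_iff (show (3:ℝ) - 2 * p ≠ 0 by intro h; linarith)
              (show (2:ℝ) * p - 3 ≠ 0 by intro h; linarith)]
            ring
          rw [e, div_eq_mul_inv, div_eq_mul_inv]
          nlinarith [mul_le_mul_of_nonneg_right (mul_le_mul_of_nonneg_left h1 h2.le) h4]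
      _ ≤ 2 ^ p/(2*p-3) * β := le_mul_of_one_le_right hK4.le (by linarith)
  rw [add_mul, add_mul, add_mul]
  exact add_le_add (add_le_add (add_le_add pieceA pieceB) pieceC) pieceD

lemma L1 {p a : ℝ} (hp : 3 / 2 < p) (ha : 0 < a) :
    ∃ C : ℝ, 0 < C ∧ ∀ b : ℝ,
      (∫ t in Ioi (0:ℝ), FF p a b t) ≤ C * (1 + Real.sqrt (max b 0)) := by
  obtain ⟨C0, hC0, h0⟩ := L1_uniform hp ha
  obtain ⟨C1, hC1, h1⟩ := L1_big hp ha
  refine ⟨C0 + C1, by positivity, fun b => ?_⟩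
  have hs : 0 ≤ Real.sqrt (max b 0) := Real.sqrt_nonneg _
  rcases le_or_gt b 4 with h | h
  · calc (∫ t in Ioi (0:ℝ), FF p a b t) ≤ C0 := h0 b h
      _ ≤ (C0 + C1) * (1 + Real.sqrt (max b 0)) := by nlinarith [mul_nonneg hC0.le hs, mul_nonneg hC1.le hs]
  · have hb0 : (0:ℝ) < b := by linarith
    have hmax : Real.sqrt b = Real.sqrt (max b 0) := by rw [max_eq_left hb0.le]
    calc (∫ t in Ioi (0:ℝ), FF p a b t) ≤ C1 * Real.sqrt b := h1 b h
      _ ≤ (C0 + C1) * (1 + Real.sqrt (max b 0)) := by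
          rw [← hmax]
          nlinarith [Real.sqrt_nonneg b, mul_nonneg hC0.le (Real.sqrt_nonneg b), mul_nonneg hC1.le (Real.sqrt_nonneg b)]

lemma bound_coef {p a : ℝ} (hp : 0 ≤ p) (ha : 0 < a) (b : ℝ) :
    ∃ K : ℝ, ∀ t : ℝ, 0 ≤ t →
      ((t ^ 2 - b) ^ 2 + a ^ 2) ^ (-(p / 2)) ≤ K * (1 + t) ^ (-(2 * p)) := by
  set T : ℝ := |b| + 1 with hT
  have hT1 : (1:ℝ) ≤ T := le_add_of_nonneg_left (abs_nonneg b)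
  set c : ℝ := min (a ^ 2 / (1 + T) ^ 4) (1/64) with hc
  have hc0 : 0 < c := lt_min (by positivity) (by norm_num)
  have claim : ∀ t : ℝ, 0 ≤ t → c * (1 + t) ^ 4 ≤ (t ^ 2 - b) ^ 2 + a ^ 2 := by
    intro t ht
    rcases le_or_gt t T with h | h
    · have h1 : c * (1 + t) ^ 4 ≤ (a ^ 2 / (1 + T) ^ 4) * (1 + T) ^ 4 :=
        mul_le_mul (min_le_left _ _) (pow_le_pow_left₀ (by linarith) (by linarith) 4)
          (by positivity) (by positivity)
      have h2 : (a ^ 2 / (1 + T) ^ 4) * (1 + T) ^ 4 = a ^ 2 := by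
        field_simp
      nlinarith [sq_nonneg (t ^ 2 - b)]
    · have h1t : (1:ℝ) ≤ t := hT1.trans h.le
      have hb2 : 2 * |b| ≤ t ^ 2 := by
        nlinarith [abs_nonneg b, mul_pos (show (0:ℝ) < t - T by linarith) (show (0:ℝ) < t + T by linarith)]
      have h2 : t ^ 2 / 2 ≤ t ^ 2 - b := by linarith [le_abs_self b]
      have h3 : (1 + t) ^ 4 ≤ 16 * t ^ 4 := by
        calc (1 + t) ^ 4 ≤ (2 * t) ^ 4 := pow_le_pow_left₀ (by linarith) (by linarith) 4
          _ = 16 * t ^ 4 := by ring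
      calc c * (1 + t) ^ 4 ≤ (1/64) * (16 * t ^ 4) :=
            mul_le_mul (min_le_right _ _) h3 (by positivity) (by norm_num)
        _ = (t ^ 2 / 2) ^ 2 := by ring
        _ ≤ (t ^ 2 - b) ^ 2 := pow_le_pow_left₀ (by positivity) h2 2
        _ ≤ (t ^ 2 - b) ^ 2 + a ^ 2 := by nlinarith [sq_nonneg a]
  refine ⟨c ^ (-(p / 2)), fun t ht => ?_⟩
  have h1 : ((t ^ 2 - b) ^ 2 + a ^ 2) ^ (-(p / 2)) ≤ (c * (1 + t) ^ 4) ^ (-(p / 2)) :=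
    Real.rpow_le_rpow_of_nonpos (by positivity) (claim t ht) (by linarith)
  have h2 : (c * (1 + t) ^ 4) ^ (-(p / 2)) = c ^ (-(p / 2)) * (1 + t) ^ (-(2 * p)) := by
    rw [Real.mul_rpow hc0.le (by positivity), ← Real.rpow_natCast (1 + t) 4,
      ← Real.rpow_mul (by linarith)]
    congr 2
    push_cast; ring
  rw [h2] at h1
  exact h1

lemma integrable3d {p a : ℝ} (hp : 3 / 2 < p) (ha : 0 < a) (b : ℝ) :
    Integrable (fun q : EuclideanSpace ℝ (Fin 3) =>
      ((‖q‖ ^ 2 - b) ^ 2 + a ^ 2) ^ (-(p / 2))) := by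
  obtain ⟨K, hK⟩ := bound_coef (by linarith : (0:ℝ) ≤ p) ha b
  have hcont : Continuous fun q : EuclideanSpace ℝ (Fin 3) =>
      ((‖q‖ ^ 2 - b) ^ 2 + a ^ 2) ^ (-(p / 2)) := by
    refine Continuous.rpow_const ?_ (fun q => Or.inl (ne_of_gt (by positivity)))
    exact (((continuous_norm.pow 2).sub continuous_const).pow 2).add continuous_const
  have hfin : ((Module.finrank ℝ (EuclideanSpace ℝ (Fin 3)) : ℝ)) < 2 * p := by
    simp only [finrank_euclideanSpace, Fintype.card_fin]
    push_cast; linarith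
  have hint : Integrable (fun q : EuclideanSpace ℝ (Fin 3) => K * (1 + ‖q‖) ^ (-(2 * p))) :=
    (integrable_one_add_norm hfin).const_mul K
  refine hint.mono' hcont.aestronglyMeasurable ?_
  filter_upwards with q
  rw [Real.norm_of_nonneg (Real.rpow_nonneg (by positivity) _)]
  exact hK ‖q‖ (norm_nonneg q)

lemma radial {p a : ℝ} (b : ℝ) :
    (∫ q : EuclideanSpace ℝ (Fin 3), ((‖q‖ ^ 2 - b) ^ 2 + a ^ 2) ^ (-(p / 2)))
      = (3 * (volume (Metric.ball (0 : EuclideanSpace ℝ (Fin 3)) 1)).toReal) *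
        ∫ t in Ioi (0:ℝ), FF p a b t := by
  rw [integral_fun_norm_addHaar (volume : Measure (EuclideanSpace ℝ (Fin 3)))
    (fun t : ℝ => ((t ^ 2 - b) ^ 2 + a ^ 2) ^ (-(p / 2)))]
  rw [show Module.finrank ℝ (EuclideanSpace ℝ (Fin 3)) = 3 by
    simp [finrank_euclideanSpace]]
  simp only [nsmul_eq_mul, smul_eq_mul, FF, measureReal_def]
  norm_num
  ring

/-- Scalar content of the resolvent bound (8.22) of Frank–Hainzl–Seiringer–Solovej in
dimension 3: for `p > 3/2` and `a > 0`, the integral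
`∫_{ℝ³} ((|q|²-μ-r)² + a²)^{-p/2} dq` is finite for every `r`, bounded by `C √r` for
`r ≥ 1`, and bounded by `C |r|^{3/2-p}` for `r ≤ -1`. -/
theorem resolvent_integral_asymptotics (p a μ : ℝ) (hp : 3 / 2 < p) (ha : 0 < a) :
    ∃ C : ℝ, 0 < C ∧
      (∀ r : ℝ, 1 ≤ r →
        (∫ q : EuclideanSpace ℝ (Fin 3), ((‖q‖ ^ 2 - μ - r) ^ 2 + a ^ 2) ^ (-(p / 2)))
          ≤ C * Real.sqrt r) ∧
      (∀ r : ℝ, r ≤ -1 →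
        (∫ q : EuclideanSpace ℝ (Fin 3), ((‖q‖ ^ 2 - μ - r) ^ 2 + a ^ 2) ^ (-(p / 2)))
          ≤ C * |r| ^ (3 / 2 - p)) ∧
      (∀ r : ℝ, Integrable
        (fun q : EuclideanSpace ℝ (Fin 3) =>
          ((‖q‖ ^ 2 - μ - r) ^ 2 + a ^ 2) ^ (-(p / 2)))) := by
  obtain ⟨C1, hC1, hL1⟩ := L1 hp ha
  obtain ⟨C2, hC2, hL2⟩ := L2 hp ha
  set V : ℝ := (volume (Metric.ball (0 : EuclideanSpace ℝ (Fin 3)) 1)).toReal with hV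
  have hV0 : 0 ≤ V := ENNReal.toReal_nonneg
  have hκ : (0:ℝ) ≤ 3 * V := by linarith
  set R0 : ℝ := 2 * (|μ| + 1) with hR0
  have hR0pos : 0 < R0 := by positivity
  set D1 : ℝ := 3 * V * C1 * (1 + Real.sqrt (|μ| + 1)) with hD1
  set D2 : ℝ := 3 * V * C1 * (1 + Real.sqrt |μ|) * R0 ^ (p - 3/2) with hD2
  set D3 : ℝ := 3 * V * C2 * 2 ^ (p - 3/2) with hD3
  have hD1n : 0 ≤ D1 := by
    have := Real.sqrt_nonneg (|μ| + 1)
    apply mul_nonneg (by positivity) (by linarith)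
  have hD2n : 0 ≤ D2 := by
    have h1 := Real.sqrt_nonneg |μ|
    have h2 : (0:ℝ) ≤ R0 ^ (p - 3/2) := Real.rpow_nonneg hR0pos.le _
    apply mul_nonneg (mul_nonneg (by positivity) (by linarith)) h2
  have hD3n : 0 ≤ D3 := by
    have h2 : (0:ℝ) ≤ (2:ℝ) ^ (p - 3/2) := Real.rpow_nonneg (by norm_num) _
    apply mul_nonneg (by positivity) h2
  refine ⟨1 + D1 + D2 + D3, by linarith, ?_, ?_, ?_⟩
  · -- r ≥ 1
    intro r hr
    simp only [sub_sub]
    rw [radial (μ + r)]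
    have hI := hL1 (μ + r)
    have hmax : max (μ + r) 0 ≤ (|μ| + 1) * r := by
      apply max_le
      · nlinarith [le_abs_self μ, mul_nonneg (abs_nonneg μ) (show (0:ℝ) ≤ r - 1 by linarith)]
      · positivity
    have hsq : Real.sqrt (max (μ + r) 0) ≤ Real.sqrt (|μ| + 1) * Real.sqrt r := by
      rw [← Real.sqrt_mul (by positivity) r]
      exact Real.sqrt_le_sqrt hmax
    have h1r : 1 ≤ Real.sqrt r := by
      rw [show (1:ℝ) = Real.sqrt 1 from Real.sqrt_one.symm]
      exact Real.sqrt_le_sqrt hr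
    have hstep : 1 + Real.sqrt (max (μ + r) 0) ≤ (1 + Real.sqrt (|μ| + 1)) * Real.sqrt r := by
      have h0 := Real.sqrt_nonneg (|μ| + 1)
      linarith [hsq, h1r, h0]
    calc 3 * V * ∫ t in Ioi (0:ℝ), FF p a (μ + r) t
        ≤ 3 * V * (C1 * (1 + Real.sqrt (max (μ + r) 0))) := mul_le_mul_of_nonneg_left hI hκ
      _ ≤ 3 * V * (C1 * ((1 + Real.sqrt (|μ| + 1)) * Real.sqrt r)) :=
          mul_le_mul_of_nonneg_left (mul_le_mul_of_nonneg_left hstep hC1.le) hκ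
      _ = D1 * Real.sqrt r := by rw [hD1]; ring
      _ ≤ (1 + D1 + D2 + D3) * Real.sqrt r :=
          mul_le_mul_of_nonneg_right (by linarith) (Real.sqrt_nonneg r)
  · -- r ≤ -1
    intro r hr
    simp only [sub_sub]
    rw [radial (μ + r)]
    have hrabs : |r| = -r := abs_of_neg (by linarith)
    have habs0 : (0:ℝ) < |r| := by rw [hrabs]; linarith
    have hrp : (0:ℝ) ≤ |r| ^ ((3:ℝ)/2 - p) := Real.rpow_nonneg habs0.le _
    rcases le_or_gt r (-R0) with hfar | hnear
    · -- far negative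
      set m : ℝ := |r| / 2 with hm
      have hm2 : m = -r / 2 := by rw [hm, hrabs]
      have hm1 : 1 ≤ m := by rw [hm2]; rw [hR0] at hfar; linarith [abs_nonneg μ]
      have hbm : μ + r ≤ -m := by
        rw [hm2]; rw [hR0] at hfar; linarith [le_abs_self μ]
      have hcomp : ∀ t ∈ Ioi (0:ℝ), FF p a (μ + r) t ≤ FF p a (-m) t := by
        intro t ht
        unfold FF
        refine mul_le_mul_of_nonneg_left ?_ (sq_nonneg t)
        refine Real.rpow_le_rpow_of_nonpos (by positivity) ?_ (by linarith)
        have h1 : (0:ℝ) ≤ t ^ 2 - -m := by linarith [sq_nonneg t]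
        have h2 : t ^ 2 - -m ≤ t ^ 2 - (μ + r) := by linarith
        have := pow_le_pow_left₀ h1 h2 2
        linarith
      have hIm := hL2 m hm1
      have hstep : (∫ t in Ioi (0:ℝ), FF p a (μ + r) t) ≤ C2 * m ^ ((3:ℝ)/2 - p) := by
        refine le_trans (setIntegral_mono_on (FF_integrableOn hp ha _)
          (FF_integrableOn hp ha _) measurableSet_Ioi hcomp) hIm
      have hmr : m ^ ((3:ℝ)/2 - p) = 2 ^ (p - 3/2) * |r| ^ ((3:ℝ)/2 - p) := by
        rw [hm, Real.div_rpow (abs_nonneg r) (by norm_num), div_eq_mul_inv,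
          ← Real.rpow_neg (by norm_num : (0:ℝ) ≤ 2)]
        rw [show -((3:ℝ)/2 - p) = p - 3/2 by ring]
        ring
      calc 3 * V * ∫ t in Ioi (0:ℝ), FF p a (μ + r) t
          ≤ 3 * V * (C2 * m ^ ((3:ℝ)/2 - p)) := mul_le_mul_of_nonneg_left hstep hκ
        _ = D3 * |r| ^ ((3:ℝ)/2 - p) := by rw [hD3, hmr]; ring
        _ ≤ (1 + D1 + D2 + D3) * |r| ^ ((3:ℝ)/2 - p) :=
            mul_le_mul_of_nonneg_right (by linarith) hrp
        _ = (1 + D1 + D2 + D3) * |r| ^ (3/2 - p) := by norm_num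
    · -- moderate negative
      have hI := hL1 (μ + r)
      have hmax : max (μ + r) 0 ≤ |μ| := by
        apply max_le
        · linarith [le_abs_self μ]
        · exact abs_nonneg μ
      have hsq : Real.sqrt (max (μ + r) 0) ≤ Real.sqrt |μ| := Real.sqrt_le_sqrt hmax
      have hstep : (∫ t in Ioi (0:ℝ), FF p a (μ + r) t) ≤ C1 * (1 + Real.sqrt |μ|) := by
        refine hI.trans (mul_le_mul_of_nonneg_left (by linarith) hC1.le)
      have hrR0 : |r| ≤ R0 := by rw [hrabs]; linarith
      have hpow : R0 ^ ((3:ℝ)/2 - p) ≤ |r| ^ ((3:ℝ)/2 - p) :=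
        Real.rpow_le_rpow_of_nonpos habs0 hrR0 (by linarith)
      have hone : R0 ^ (p - 3/2) * R0 ^ ((3:ℝ)/2 - p) = 1 := by
        rw [← Real.rpow_add hR0pos]
        norm_num
      have hRpos : (0:ℝ) < R0 ^ (p - 3/2) := Real.rpow_pos_of_pos hR0pos _
      calc 3 * V * ∫ t in Ioi (0:ℝ), FF p a (μ + r) t
          ≤ 3 * V * (C1 * (1 + Real.sqrt |μ|)) := mul_le_mul_of_nonneg_left hstep hκ
        _ = (3 * V * (C1 * (1 + Real.sqrt |μ|))) * (R0 ^ (p - 3/2) * R0 ^ ((3:ℝ)/2 - p)) := by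
            rw [hone, mul_one]
        _ ≤ (3 * V * (C1 * (1 + Real.sqrt |μ|))) * (R0 ^ (p - 3/2) * |r| ^ ((3:ℝ)/2 - p)) := by
            refine mul_le_mul_of_nonneg_left ?_ ?_
            · exact mul_le_mul_of_nonneg_left hpow hRpos.le
            · have h9 := Real.sqrt_nonneg |μ|
              exact mul_nonneg (by positivity) (mul_nonneg hC1.le (by linarith))
        _ = D2 * |r| ^ ((3:ℝ)/2 - p) := by rw [hD2]; ring
        _ ≤ (1 + D1 + D2 + D3) * |r| ^ ((3:ℝ)/2 - p) :=
            mul_le_mul_of_nonneg_right (by linarith) hrp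
        _ = (1 + D1 + D2 + D3) * |r| ^ (3/2 - p) := by norm_num
  · -- integrability
    intro r
    have := integrable3d hp ha (μ + r)
    simpa only [sub_sub] using this
end
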